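/- arXiv:2110.09372 — 2 statements merged into one kernel-verified Lean document; each statement's English description precedes it below -/
import Mathlib

section
/- Let t_1, t_2, t_3 > 0, t_4 = 1, let mu(k) = t_1 + i t_2 e^{i k_1} - t_3 e^{i (k_1+k_2)} - i e^{i k_2}, and let p in [-pi,pi]^2 satisfy mu(p) = 0. Set K_{p,r} = i^{r-1} t_r e^{-i p . v_r} for r in {1,2,3,4}, alpha = d mu / d k_1 (p), beta = d mu / d k_2 (p), and phi_p(x) = beta x_1 - alpha x_2. Then (identifying each face with the type-r edges it crosses on the unit lattice, a = 1): for every x in Z^2, every j in {1,2}, and EVERY dual path C from the face eta_x to the face eta_{x + e_j}, the sum over e in C of sigma_e * K_{p, r(e)} takes the same value, equal to -i times the partial derivative in direction j of phi_p; explicitly, it equals -i beta for j = 1 and +i alpha for j = 2. (Path independence uses that K_{p,1} + K_{p,2} + K_{p,3} + K_{p,4} = mu(p) = 0.) -/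
/-!
Since `K_{p,1} + K_{p,2} + K_{p,3} + K_{p,4} = μ(p) = 0`, the edge weights `σ_e K_{p,r(e)}` form
an exact 1-form on the dual lattice: the increments are those of the face potential
`Φ(η_x) = -x₁ (K₁ + K₂) + x₂ (K₁ + K₄)` (and `Φ - K₁` on the other faces). The sum along any dual
path therefore telescopes to the difference of `Φ` at its endpoints, which is `-(K₁ + K₂) = K₃ + K₄ = -iβ`
for a step `e₁` and `K₁ + K₄ = -(K₂ + K₃) = iα` for a step `e₂`.
-/

noncomputable section

/-- The displacements `v_r`. -/
def vv : Fin 4 → ℤ × ℤ := ![(0, 0), (-1, 0), (-1, -1), (0, -1)]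

/-- The weights `t_1, t_2, t_3, t_4 = 1`. -/
def tw (t1 t2 t3 : ℝ) : Fin 4 → ℝ := ![t1, t2, t3, 1]

/-- The dispersion relation `μ(k) = t₁ + i t₂ e^{i k₁} - t₃ e^{i(k₁+k₂)} - i e^{i k₂}`. -/
def mu (t1 t2 t3 : ℝ) (k : ℝ × ℝ) : ℂ :=
  t1 + Complex.I * t2 * Complex.exp (Complex.I * k.1) -
    t3 * Complex.exp (Complex.I * (k.1 + k.2)) - Complex.I * Complex.exp (Complex.I * k.2)

/-- `α = ∂μ/∂k₁`. -/
def dmu1 (t2 t3 : ℝ) (k : ℝ × ℝ) : ℂ :=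
  -t2 * Complex.exp (Complex.I * k.1) - Complex.I * t3 * Complex.exp (Complex.I * (k.1 + k.2))

/-- `β = ∂μ/∂k₂`. -/
def dmu2 (t3 : ℝ) (k : ℝ × ℝ) : ℂ :=
  -Complex.I * t3 * Complex.exp (Complex.I * (k.1 + k.2)) + Complex.exp (Complex.I * k.2)

/-- `K_{p,r} = i^{r-1} t_r e^{-i p·v_r}`. -/
def Kp (t1 t2 t3 : ℝ) (p : ℝ × ℝ) (r : Fin 4) : ℂ :=
  Complex.I ^ (r : ℕ) * tw t1 t2 t3 r *
    Complex.exp (-Complex.I * (p.1 * ((vv r).1 : ℝ) + p.2 * ((vv r).2 : ℝ)))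

/-- A face of the lattice: `((m,n), true)` is the face `η_{(m,n)}` with black bottom
vertex `(m,n)`; `((m,n), false)` is the face centered at `(m+1/2, n)`. -/
abbrev Face := (ℤ × ℤ) × Bool

/-- One step of a dual path: the neighboring face, the crossed edge (black endpoint and
type) and the crossing sign `σ_e` (`+1` iff the white endpoint of the crossed edge lies
to the right of the direction of motion). -/
def faceStep (f : Face) (d : Fin 4) : Face × ((ℤ × ℤ) × Fin 4) × ℤ :=
  match f, (d : ℕ) with
  | ((m, n), true), 0 => ((((m, n), false)), ((m, n), 0), -1)
  | ((m, n), true), 1 => ((((m - 1, n), false)), ((m, n), 1), 1)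
  | ((m, n), true), 2 => ((((m, n + 1), false)), ((m, n + 1), 3), 1)
  | ((m, n), true), _ => ((((m - 1, n + 1), false)), ((m, n + 1), 2), -1)
  | ((m, n), false), 0 => ((((m, n), true)), ((m, n), 0), 1)
  | ((m, n), false), 1 => ((((m + 1, n), true)), ((m + 1, n), 1), -1)
  | ((m, n), false), 2 => ((((m, n - 1), true)), ((m, n), 3), -1)
  | ((m, n), false), _ => ((((m + 1, n - 1), true)), ((m + 1, n), 2), 1)

def endFace : Face → List (Fin 4) → Face
  | f, [] => f
  | f, d :: s => endFace (faceStep f d).1 s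

/-- `∑_{e ∈ C} σ_e F(e)` along a dual path, complex-valued version. -/
def pathSumC (F : (ℤ × ℤ) → Fin 4 → ℂ) : Face → List (Fin 4) → ℂ
  | _, [] => 0
  | f, d :: s =>
      ((faceStep f d).2.2 : ℂ) * F (faceStep f d).2.1.1 (faceStep f d).2.1.2 +
        pathSumC F (faceStep f d).1 s

/-- The unit coordinate vectors of `ℤ²`. -/
def ej : Fin 2 → ℤ × ℤ := ![(1, 0), (0, 1)]

/-- Lean's edge types `r : Fin 4` are the paper's `r + 1`. -/
def facePotential (K : Fin 4 → ℂ) : Face → ℂ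
  | ((m, n), true) => -(m : ℂ) * (K 0 + K 1) + (n : ℂ) * (K 0 + K 3)
  | ((m, n), false) => -(m : ℂ) * (K 0 + K 1) + (n : ℂ) * (K 0 + K 3) - K 0

section FacePotential

variable {K : Fin 4 → ℂ}

theorem sign_mul_faceStep_eq_facePotential_sub (hK : K 0 + K 1 + K 2 + K 3 = 0)
    (f : Face) (d : Fin 4) :
    ((faceStep f d).2.2 : ℂ) * K (faceStep f d).2.1.2 =
      facePotential K (faceStep f d).1 - facePotential K f := by
  have hK2 : K 2 = -K 0 - K 1 - K 3 := by linear_combination hK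
  obtain ⟨⟨m, n⟩, b⟩ := f
  cases b <;> fin_cases d <;> simp only [faceStep, facePotential, hK2] <;> push_cast <;> ring

theorem pathSumC_eq_facePotential_sub (hK : K 0 + K 1 + K 2 + K 3 = 0)
    (f : Face) (s : List (Fin 4)) :
    pathSumC (fun _ r => K r) f s = facePotential K (endFace f s) - facePotential K f := by
  induction s generalizing f with
  | nil => simp [pathSumC, endFace]
  | cons d s ih =>
    rw [pathSumC, endFace, ih, sign_mul_faceStep_eq_facePotential_sub hK]
    ring

theorem facePotential_add_ej_sub (x : ℤ × ℤ) (j : Fin 2) :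
    facePotential K (x + ej j, true) - facePotential K (x, true) =
      if j = 0 then -(K 0 + K 1) else K 0 + K 3 := by
  obtain ⟨m, n⟩ := x
  fin_cases j <;> simp [ej, facePotential] <;> ring

end FacePotential

section Kp

variable (t1 t2 t3 : ℝ) (p : ℝ × ℝ)

theorem Kp_zero : Kp t1 t2 t3 p 0 = t1 := by
  simp [Kp, vv, tw]

theorem Kp_one : Kp t1 t2 t3 p 1 = Complex.I * t2 * Complex.exp (Complex.I * p.1) := by
  simp [Kp, vv, tw]

theorem Kp_two : Kp t1 t2 t3 p 2 = -t3 * Complex.exp (Complex.I * (p.1 + p.2)) := by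
  simp [Kp, vv, tw]
  left
  ring_nf

theorem Kp_three : Kp t1 t2 t3 p 3 = -Complex.I * Complex.exp (Complex.I * p.2) := by
  simp [Kp, vv, tw]

theorem Kp_sum_eq_mu :
    Kp t1 t2 t3 p 0 + Kp t1 t2 t3 p 1 + Kp t1 t2 t3 p 2 + Kp t1 t2 t3 p 3 = mu t1 t2 t3 p := by
  rw [Kp_zero, Kp_one, Kp_two, Kp_three, mu]
  ring

theorem Kp_one_add_Kp_two : Kp t1 t2 t3 p 1 + Kp t1 t2 t3 p 2 = -(Complex.I * dmu1 t2 t3 p) := by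
  rw [Kp_one, Kp_two, dmu1]
  linear_combination -(t3 : ℂ) * Complex.exp (Complex.I * (p.1 + p.2)) * Complex.I_sq

theorem Kp_two_add_Kp_three : Kp t1 t2 t3 p 2 + Kp t1 t2 t3 p 3 = -Complex.I * dmu2 t3 p := by
  rw [Kp_two, Kp_three, dmu2]
  linear_combination -(t3 : ℂ) * Complex.exp (Complex.I * (p.1 + p.2)) * Complex.I_sq

end Kp

theorem lattice_sum_rule_general
    (t1 t2 t3 : ℝ)
    (p : ℝ × ℝ) (hp : mu t1 t2 t3 p = 0) :
    ∀ (x : ℤ × ℤ) (j : Fin 2) (s : List (Fin 4)),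
      endFace (x, true) s = (x + ej j, true) →
      pathSumC (fun _ r => Kp t1 t2 t3 p r) (x, true) s =
        if j = 0 then -Complex.I * dmu2 t3 p else Complex.I * dmu1 t2 t3 p := by
  intro x j s hs
  have hK := (Kp_sum_eq_mu t1 t2 t3 p).trans hp
  rw [pathSumC_eq_facePotential_sub hK, hs, facePotential_add_ej_sub]
  fin_cases j
  · simp only [Fin.zero_eta, if_true]
    linear_combination -hK + Kp_two_add_Kp_three t1 t2 t3 p
  · simp only [Fin.mk_one, one_ne_zero, if_false]
    linear_combination hK - Kp_one_add_Kp_two t1 t2 t3 p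

/-- If `μ(p) = 0` then, for every `x ∈ ℤ²`, every `j ∈ {1,2}` and
EVERY dual path `C` from the face `η_x` to the face `η_{x+e_j}`, the sum
`∑_{e ∈ C} σ_e K_{p,r(e)}` equals `-i ∂_j φ_p`, i.e. `-iβ` for `j = 1` and `+iα` for
`j = 2`. -/
theorem lattice_sum_rule
    (t1 t2 t3 : ℝ) (ht1 : 0 < t1) (ht2 : 0 < t2) (ht3 : 0 < t3)
    (p : ℝ × ℝ) (hp : mu t1 t2 t3 p = 0) :
    ∀ (x : ℤ × ℤ) (j : Fin 2) (s : List (Fin 4)),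
      endFace (x, true) s = (x + ej j, true) →
      pathSumC (fun _ r => Kp t1 t2 t3 p r) (x, true) s =
        if j = 0 then -Complex.I * dmu2 t3 p else Complex.I * dmu1 t2 t3 p :=
  lattice_sum_rule_general t1 t2 t3 p hp
end
end

section
/- Let z_1, z_2, z_3, z_4 be four distinct complex numbers such that the closed straight-line segments [z_1, z_2] and [z_3, z_4] are disjoint. Then minus the real part of the iterated contour integral of 1/(z - z')^2, taken with z' along the segment from z_3 to z_4 and z along the segment from z_1 to z_2, equals log( ( |z_4 - z_1| * |z_3 - z_2| ) / ( |z_4 - z_2| * |z_3 - z_1| ) ). -/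
/-!
For `w` off the segment `γ(s) = a + s (b - a)`, the function `s ↦ (w - γ(s))⁻¹` is a primitive
of `(w - γ(s))⁻² γ'`, so the inner integral is `(z - z₄)⁻¹ - (z - z₃)⁻¹`. For `c` off the
segment `[z₁, z₂]`, the real part of `(z - c)⁻¹ dz` is `d log |z - c|`, so the real part of the
outer integral telescopes to differences of `log |zᵢ - zⱼ|` at the endpoints. Disjointness of
the segments keeps every integrand continuous and every logarithm finite.
-/

open intervalIntegral Set

theorem HasDerivAt.log_norm {f : ℝ → ℂ} {b : ℂ} {t : ℝ} (hf : HasDerivAt f b t) (h0 : f t ≠ 0) :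
    HasDerivAt (fun t => Real.log ‖f t‖) (b / f t).re t := by
  have hsq : (fun t => Real.log ‖f t‖) = fun t => Real.log (‖f t‖ ^ 2) / 2 := by
    funext u; rw [Real.log_pow]; push_cast; ring
  rw [hsq]
  refine ((hf.norm_sq.log (by positivity)).div_const 2).congr_deriv ?_
  rw [Complex.inner, Complex.div_re, ← Complex.normSq_eq_norm_sq, Complex.mul_re,
    Complex.conj_re, Complex.conj_im]
  ring

theorem hasDerivAt_add_ofReal_mul (a v : ℂ) (t : ℝ) :
    HasDerivAt (fun t : ℝ => a + t * v) v t := by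
  simpa using ((hasDerivAt_id t).ofReal_comp.mul_const v).const_add a

theorem add_ofReal_mul_sub_mem_segment (a b : ℂ) {t : ℝ} (ht : t ∈ Icc (0 : ℝ) 1) :
    a + t * (b - a) ∈ segment ℝ a b := by
  rw [segment_eq_image']
  exact ⟨t, ht, by simp [Complex.real_smul]⟩

theorem integral_inv_sq_segment {a b w : ℂ} (hw : w ∉ segment ℝ a b) :
    ∫ s in (0 : ℝ)..1, 1 / (w - (a + s * (b - a))) ^ 2 * (b - a) = (w - b)⁻¹ - (w - a)⁻¹ := by
  have hne : ∀ s ∈ uIcc (0 : ℝ) 1, w - (a + s * (b - a)) ≠ 0 := by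
    intro s hs
    rw [uIcc_of_le zero_le_one] at hs
    exact sub_ne_zero.2 fun h => hw (h ▸ add_ofReal_mul_sub_mem_segment a b hs)
  have hderiv : ∀ s ∈ uIcc (0 : ℝ) 1, HasDerivAt (fun s : ℝ => (w - (a + s * (b - a)))⁻¹)
      (1 / (w - (a + s * (b - a))) ^ 2 * (b - a)) s := by
    intro s hs
    refine (((hasDerivAt_add_ofReal_mul a (b - a) s).const_sub w).inv (hne s hs)).congr_deriv ?_
    rw [neg_neg, one_div_mul_eq_div]
  have hcont : ContinuousOn (fun s : ℝ => 1 / (w - (a + s * (b - a))) ^ 2 * (b - a))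
      (uIcc 0 1) :=
    (continuousOn_const.div (by fun_prop) fun s hs => pow_ne_zero 2 (hne s hs)).mul
      continuousOn_const
  rw [integral_eq_sub_of_hasDerivAt hderiv hcont.intervalIntegrable]
  simp

theorem continuousOn_inv_sub_segment {a b c : ℂ} (hc : c ∉ segment ℝ a b) :
    ContinuousOn (fun t : ℝ => (a + t * (b - a) - c)⁻¹ * (b - a)) (uIcc 0 1) := by
  refine (ContinuousOn.inv₀ (by fun_prop) ?_).mul continuousOn_const
  intro t ht
  rw [uIcc_of_le zero_le_one] at ht
  exact sub_ne_zero.2 fun h => hc (h ▸ add_ofReal_mul_sub_mem_segment a b ht)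

theorem re_integral_inv_sub_segment {a b c : ℂ} (hc : c ∉ segment ℝ a b) :
    (∫ t in (0 : ℝ)..1, (a + t * (b - a) - c)⁻¹ * (b - a)).re =
      Real.log ‖b - c‖ - Real.log ‖a - c‖ := by
  have hderiv : ∀ t ∈ uIcc (0 : ℝ) 1, HasDerivAt (fun t : ℝ => Real.log ‖a + t * (b - a) - c‖)
      ((a + t * (b - a) - c)⁻¹ * (b - a)).re t := by
    intro t ht
    rw [uIcc_of_le zero_le_one] at ht
    rw [inv_mul_eq_div]
    exact ((hasDerivAt_add_ofReal_mul a (b - a) t).sub_const c).log_norm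
      (sub_ne_zero.2 fun h => hc (h ▸ add_ofReal_mul_sub_mem_segment a b ht))
  have hcont := continuousOn_inv_sub_segment hc
  rw [← Complex.reCLM_apply, ← Complex.reCLM.intervalIntegral_comp_comm hcont.intervalIntegrable]
  simp only [Complex.reCLM_apply]
  rw [integral_eq_sub_of_hasDerivAt hderiv
    (Complex.continuous_re.comp_continuousOn hcont).intervalIntegrable]
  simp

theorem iterated_segment_integral_log_general
    (z1 z2 z3 z4 : ℂ)
    (hdisj : Disjoint (segment ℝ z1 z2) (segment ℝ z3 z4)) :
    -(∫ t in (0:ℝ)..1,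
        (∫ s in (0:ℝ)..1,
          (1 / ((z1 + (t : ℂ) * (z2 - z1)) - (z3 + (s : ℂ) * (z4 - z3))) ^ 2) *
            (z4 - z3)) *
          (z2 - z1)).re =
      Real.log ((‖z4 - z1‖ * ‖z3 - z2‖) /
        (‖z4 - z2‖ * ‖z3 - z1‖)) := by
  have h3 : z3 ∉ segment ℝ z1 z2 := hdisj.notMem_of_mem_right (left_mem_segment ℝ z3 z4)
  have h4 : z4 ∉ segment ℝ z1 z2 := hdisj.notMem_of_mem_right (right_mem_segment ℝ z3 z4)
  have hinner : EqOn
      (fun t : ℝ => (∫ s in (0:ℝ)..1,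
        1 / ((z1 + t * (z2 - z1)) - (z3 + s * (z4 - z3))) ^ 2 * (z4 - z3)) * (z2 - z1))
      (fun t : ℝ => (z1 + t * (z2 - z1) - z4)⁻¹ * (z2 - z1) -
        (z1 + t * (z2 - z1) - z3)⁻¹ * (z2 - z1)) (uIcc 0 1) := by
    intro t ht
    rw [uIcc_of_le zero_le_one] at ht
    beta_reduce
    rw [integral_inv_sq_segment
      (hdisj.notMem_of_mem_left (add_ofReal_mul_sub_mem_segment z1 z2 ht)), sub_mul]
  rw [integral_congr hinner, integral_sub (continuousOn_inv_sub_segment h4).intervalIntegrable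
    (continuousOn_inv_sub_segment h3).intervalIntegrable, Complex.sub_re,
    re_integral_inv_sub_segment h4, re_integral_inv_sub_segment h3]
  have hne : ∀ {u v : ℂ}, u ∈ segment ℝ z1 z2 → v ∉ segment ℝ z1 z2 → ‖v - u‖ ≠ 0 :=
    fun hu hv => norm_ne_zero_iff.2 (sub_ne_zero.2 (ne_of_mem_of_not_mem hu hv).symm)
  have h1 := left_mem_segment ℝ z1 z2
  have h2 := right_mem_segment ℝ z1 z2
  rw [Real.log_div (mul_ne_zero (hne h1 h4) (hne h2 h3)) (mul_ne_zero (hne h2 h4) (hne h1 h3)),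
    Real.log_mul (hne h1 h4) (hne h2 h3), Real.log_mul (hne h2 h4) (hne h1 h3),
    norm_sub_rev z4 z1, norm_sub_rev z3 z2, norm_sub_rev z4 z2, norm_sub_rev z3 z1]
  ring

/-- For four distinct complex numbers with `[z₁,z₂] ∩ [z₃,z₄] = ∅`,
`-Re ∫_{[z₁,z₂]} dz ∫_{[z₃,z₄]} dz' (z-z')⁻² = log (|z₄-z₁||z₃-z₂| / (|z₄-z₂||z₃-z₁|))`,
the contour integral along the segment from `u` to `v` being
`∫₀¹ f(u + t(v-u)) (v-u) dt`. -/
theorem iterated_segment_integral_log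
    (z1 z2 z3 z4 : ℂ)
    (h12 : z1 ≠ z2) (h13 : z1 ≠ z3) (h14 : z1 ≠ z4)
    (h23 : z2 ≠ z3) (h24 : z2 ≠ z4) (h34 : z3 ≠ z4)
    (hdisj : Disjoint (segment ℝ z1 z2) (segment ℝ z3 z4)) :
    -(∫ t in (0:ℝ)..1,
        (∫ s in (0:ℝ)..1,
          (1 / ((z1 + (t : ℂ) * (z2 - z1)) - (z3 + (s : ℂ) * (z4 - z3))) ^ 2) *
            (z4 - z3)) *
          (z2 - z1)).re =
      Real.log ((‖z4 - z1‖ * ‖z3 - z2‖) /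
        (‖z4 - z2‖ * ‖z3 - z1‖)) :=
  iterated_segment_integral_log_general z1 z2 z3 z4 hdisj
end
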